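/- arXiv:2511.18876 — 5 statements merged into one kernel-verified Lean document; each statement's English description precedes it below -/
import Mathlib

section
/- Let Z be a binomial random variable with parameters N and p, with the convention 0/0 = 0. Then E[1(Z ≥ 1)/Z] ≤ 2/((N+1)p). -/
/-!
Since `(k + 1) * C(N + 1, k + 1) = (N + 1) * C(N, k)`, dividing the `Bin(N, p)` weight of `k` by
`k + 1` gives `1 / ((N + 1) p)` times the `Bin(N + 1, p)` weight of `k + 1`. Hence
`E[1 / (Z + 1)] ≤ 1 / ((N + 1) p)`, and `1 / k ≤ 2 / (k + 1)` for `k ≥ 1` costs the factor `2`.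
-/

open Finset

lemma one_div_le_two_div_add_one {x : ℝ} (hx : 1 ≤ x) : 1 / x ≤ 2 / (x + 1) := by
  rw [div_le_div_iff₀ (by linarith) (by linarith)]
  linarith

lemma add_one_mul_choose_succ_mul_pow {R : Type*} [CommSemiring R] (N k : ℕ) (p q : R) :
    ((k : R) + 1) * ((N + 1).choose (k + 1) * p ^ (k + 1) * q ^ (N - k)) =
      ((N : R) + 1) * p * (N.choose k * p ^ k * q ^ (N - k)) := by
  have h := congrArg (Nat.cast : ℕ → R) (Nat.add_one_mul_choose_eq N k)
  push_cast at h
  calc ((k : R) + 1) * ((N + 1).choose (k + 1) * p ^ (k + 1) * q ^ (N - k))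
      = ((N + 1).choose (k + 1) * ((k : R) + 1)) * p * p ^ k * q ^ (N - k) := by ring
    _ = ((N : R) + 1) * p * (N.choose k * p ^ k * q ^ (N - k)) := by rw [← h]; ring

lemma sum_range_choose_succ_mul_pow_le_add_pow {R : Type*} [CommSemiring R] [PartialOrder R]
    [IsOrderedRing R] (N : ℕ) {p q : R} (hp : 0 ≤ p) (hq : 0 ≤ q) :
    ∑ k ∈ range (N + 1), ((N + 1).choose (k + 1) : R) * p ^ (k + 1) * q ^ (N - k) ≤
      (p + q) ^ (N + 1) := by
  rw [add_pow, sum_range_succ' _ (N + 1)]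
  refine le_add_of_le_of_nonneg (sum_le_sum fun k _ => ?_) (by positivity)
  rw [Nat.add_sub_add_right]
  exact le_of_eq (by ring)

lemma binomial_weight_mul_indicator_inv_le (N k : ℕ) {p q : ℝ} (hp : 0 < p) (hq : 0 ≤ q) :
    (N.choose k : ℝ) * p ^ k * q ^ (N - k) * (if 1 ≤ k then 1 / (k : ℝ) else 0) ≤
      2 / ((N + 1 : ℝ) * p) * ((N + 1).choose (k + 1) * p ^ (k + 1) * q ^ (N - k)) := by
  split_ifs with hk
  · have hk' : (1 : ℝ) ≤ k := by exact_mod_cast hk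
    calc (N.choose k : ℝ) * p ^ k * q ^ (N - k) * (1 / (k : ℝ))
        ≤ (N.choose k : ℝ) * p ^ k * q ^ (N - k) * (2 / ((k : ℝ) + 1)) :=
          mul_le_mul_of_nonneg_left (one_div_le_two_div_add_one hk') (by positivity)
      _ = 2 / ((N + 1 : ℝ) * p) * ((N + 1).choose (k + 1) * p ^ (k + 1) * q ^ (N - k)) := by
          have := add_one_mul_choose_succ_mul_pow N k p q
          field_simp
          linarith
  · rw [mul_zero]
    positivity

/-- If `Z ~ Bin(N, p)` with `p ∈ (0,1]`, then `E[1(Z ≥ 1)/Z] ≤ 2/((N+1)p)`,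
with the convention that `1(Z ≥ 1)/Z = 0` when `Z = 0`. -/
theorem binomial_indicator_inv_expectation_le
    (N : ℕ) (p : ℝ) (hp0 : 0 < p) (hp1 : p ≤ 1) :
    ∑ k ∈ Finset.range (N + 1),
      (N.choose k : ℝ) * p ^ k * (1 - p) ^ (N - k) *
        (if 1 ≤ k then 1 / (k : ℝ) else 0)
      ≤ 2 / ((N + 1 : ℝ) * p) := by
  have hq : 0 ≤ 1 - p := by linarith
  calc ∑ k ∈ range (N + 1),
        (N.choose k : ℝ) * p ^ k * (1 - p) ^ (N - k) * (if 1 ≤ k then 1 / (k : ℝ) else 0)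
      ≤ ∑ k ∈ range (N + 1), 2 / ((N + 1 : ℝ) * p) *
          ((N + 1).choose (k + 1) * p ^ (k + 1) * (1 - p) ^ (N - k)) :=
        sum_le_sum fun k _ => binomial_weight_mul_indicator_inv_le N k hp0 hq
    _ = 2 / ((N + 1 : ℝ) * p) *
          ∑ k ∈ range (N + 1), ((N + 1).choose (k + 1) : ℝ) * p ^ (k + 1) * (1 - p) ^ (N - k) :=
        (mul_sum _ _ _).symm
    _ ≤ 2 / ((N + 1 : ℝ) * p) * (p + (1 - p)) ^ (N + 1) := by
        gcongr
        exact sum_range_choose_succ_mul_pow_le_add_pow N hp0.le hq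
    _ = 2 / ((N + 1 : ℝ) * p) := by norm_num
end

section
/- Let x ∈ ℝⁿ, β > 0, M = max_j x_j, A = {j : x_j = M}, and γ = min_{j ∉ A} (M − x_j) if A ≠ [n] (γ = +∞ otherwise). Then for every i ∈ [n], |softmax_β(x)_i − (1/|A|)·1(i ∈ A)| ≤ max{1/|A|, (n − |A|)/|A|²}·exp(−γ/β). -/
open Real Finset

/-!
Dividing numerator and denominator by `exp (M / β)` turns the softmax into `w i / ∑ j, w j` with
`w j = exp ((x j - M) / β)`, which is `1` on the argmax set `A` and at most `ε = exp (-γ / β)`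
off it. Hence `∑ j, w j = |A| + R` with `0 ≤ R ≤ (n - |A|) ε`; for `i ∈ A` the error is
`1 / |A| - 1 / (|A| + R) ≤ R / |A|²`, and for `i ∉ A` it is `w i / (|A| + R) ≤ ε / |A|`.
-/

theorem exp_div_sum_exp_eq_sub {ι : Type*} [Fintype ι] (x : ι → ℝ) (β c : ℝ) (i : ι) :
    exp (x i / β) / ∑ j, exp (x j / β) = exp ((x i - c) / β) / ∑ j, exp ((x j - c) / β) := by
  have hshift : ∀ j, exp (x j / β) = exp (c / β) * exp ((x j - c) / β) := fun j => by
    rw [← exp_add]; ring_nf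
  simp only [hshift, ← mul_sum]
  exact mul_div_mul_left _ _ (exp_ne_zero _)

theorem abs_one_div_add_sub_one_div_le {a R : ℝ} (ha : 0 < a) (hR : 0 ≤ R) :
    |1 / (a + R) - 1 / a| ≤ R / a ^ 2 := by
  have hdiff : 1 / (a + R) - 1 / a = -(R / (a * (a + R))) := by
    field_simp; ring
  rw [hdiff, abs_neg, abs_of_nonneg (by positivity)]
  exact div_le_div_of_nonneg_left hR (by positivity) (by nlinarith)

section Weights

variable {ι : Type*} [Fintype ι] [DecidableEq ι] {w : ι → ℝ} {A : Finset ι} {ε : ℝ}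

theorem sum_eq_card_add_sum_sdiff_of_eq_one (hA : ∀ j ∈ A, w j = 1) :
    ∑ j, w j = #A + ∑ j ∈ univ \ A, w j := by
  rw [← sum_sdiff (subset_univ A), sum_congr rfl hA, sum_const, nsmul_one, add_comm]

theorem sum_sdiff_le_card_mul (hε : ∀ j ∉ A, w j ≤ ε) :
    ∑ j ∈ univ \ A, w j ≤ #(univ \ A) * ε := by
  rw [← nsmul_eq_mul]
  exact sum_le_card_nsmul _ _ _ fun j hj => hε j (mem_sdiff.mp hj).2

theorem abs_div_sum_sub_one_div_card_le_of_mem (hA : ∀ j ∈ A, w j = 1) (hw : ∀ j, 0 ≤ w j)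
    (hε : ∀ j ∉ A, w j ≤ ε) {i : ι} (hi : i ∈ A) :
    |w i / ∑ j, w j - 1 / #A| ≤ #(univ \ A) / (#A : ℝ) ^ 2 * ε := by
  have hcard : (0 : ℝ) < #A := by exact_mod_cast card_pos.mpr ⟨i, hi⟩
  rw [hA i hi, sum_eq_card_add_sum_sdiff_of_eq_one hA]
  calc |1 / (#A + ∑ j ∈ univ \ A, w j) - 1 / #A|
      ≤ (∑ j ∈ univ \ A, w j) / (#A : ℝ) ^ 2 :=
        abs_one_div_add_sub_one_div_le hcard (sum_nonneg fun j _ => hw j)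
    _ ≤ #(univ \ A) * ε / (#A : ℝ) ^ 2 := by gcongr; exact sum_sdiff_le_card_mul hε
    _ = #(univ \ A) / (#A : ℝ) ^ 2 * ε := by ring

theorem div_sum_le_div_card_of_not_mem (hA : ∀ j ∈ A, w j = 1) (hw : ∀ j, 0 ≤ w j)
    (hε : ∀ j ∉ A, w j ≤ ε) (hAne : A.Nonempty) {i : ι} (hi : i ∉ A) :
    w i / ∑ j, w j ≤ ε / #A := by
  have hcard : (0 : ℝ) < #A := by exact_mod_cast card_pos.mpr hAne
  have hsum : (#A : ℝ) ≤ ∑ j, w j := by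
    rw [sum_eq_card_add_sum_sdiff_of_eq_one hA]
    linarith [sum_nonneg fun j (_ : j ∈ univ \ A) => hw j]
  exact div_le_div₀ ((hw i).trans (hε i hi)) (hε i hi) hcard hsum

theorem abs_div_sum_sub_indicator_le (hA : ∀ j ∈ A, w j = 1) (hw : ∀ j, 0 ≤ w j)
    (hε : ∀ j ∉ A, w j ≤ ε) (hAne : A.Nonempty) (hε0 : 0 ≤ ε) (i : ι) :
    |w i / ∑ j, w j - if i ∈ A then 1 / (#A : ℝ) else 0|
      ≤ max (1 / (#A : ℝ)) (#(univ \ A) / (#A : ℝ) ^ 2) * ε := by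
  by_cases hi : i ∈ A
  · rw [if_pos hi]
    exact (abs_div_sum_sub_one_div_card_le_of_mem hA hw hε hi).trans
      (mul_le_mul_of_nonneg_right (le_max_right _ _) hε0)
  · rw [if_neg hi, sub_zero, abs_of_nonneg (div_nonneg (hw i) (sum_nonneg fun j _ => hw j))]
    calc w i / ∑ j, w j ≤ ε / #A := div_sum_le_div_card_of_not_mem hA hw hε hAne hi
      _ = 1 / (#A : ℝ) * ε := by ring
      _ ≤ _ := mul_le_mul_of_nonneg_right (le_max_left _ _) hε0

end Weights

/-- Softmax converges exponentially fast to the uniform distribution on the argmax set: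
with `M = max_j x_j`, `A = {j : x_j = M}` and `γ = min_{j ∉ A}(M − x_j)` (the bound being
`0` when `A = [n]`, corresponding to `γ = +∞`), for every `i`,
`|softmax_β(x)_i − 1(i ∈ A)/|A|| ≤ max{1/|A|, (n−|A|)/|A|²}·exp(−γ/β)`. -/
theorem softmax_argmax_bound (n : ℕ) [NeZero n] (x : Fin n → ℝ) (β : ℝ) (hβ : 0 < β) :
    ∀ i : Fin n,
      letI M : ℝ := Finset.univ.sup' Finset.univ_nonempty x
      letI A : Finset (Fin n) := Finset.univ.filter (fun j => x j = M)
      |Real.exp (x i / β) / (∑ j, Real.exp (x j / β)) -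
          (if i ∈ A then 1 / (A.card : ℝ) else 0)|
        ≤ if hA : A = Finset.univ then 0
          else
            max (1 / (A.card : ℝ)) (((n : ℝ) - A.card) / (A.card : ℝ) ^ 2) *
              Real.exp
                (-(Finset.univ \ A).inf'
                    (Finset.sdiff_nonempty.mpr fun hsub =>
                      hA (Finset.univ_subset_iff.mp hsub))
                    (fun j => M - x j) / β) := by
  intro i
  set M : ℝ := univ.sup' univ_nonempty x
  set A : Finset (Fin n) := univ.filter (fun j => x j = M)
  set w : Fin n → ℝ := fun j => exp ((x j - M) / β)
  have hAne : A.Nonempty := by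
    obtain ⟨j, -, hj⟩ := exists_mem_eq_sup' univ_nonempty x
    exact ⟨j, mem_filter.mpr ⟨mem_univ j, hj.symm⟩⟩
  have hw : ∀ j, 0 ≤ w j := fun j => (exp_pos _).le
  have hwA : ∀ j ∈ A, w j = 1 := fun j hj => by simp [w, (mem_filter.mp hj).2]
  rw [exp_div_sum_exp_eq_sub x β M]
  by_cases hA : A = univ
  · rw [dif_pos hA]
    have hε : ∀ j ∉ A, w j ≤ 0 := fun j hj => (hj (hA ▸ mem_univ j)).elim
    exact (abs_div_sum_sub_indicator_le hwA hw hε hAne le_rfl i).trans_eq (mul_zero _)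
  · rw [dif_neg hA]
    set γ := (univ \ A).inf' _ fun j => M - x j
    have hwε : ∀ j ∉ A, w j ≤ exp (-γ / β) := fun j hj => by
      have hγ : γ ≤ M - x j := inf'_le _ (mem_sdiff.mpr ⟨mem_univ j, hj⟩)
      exact exp_le_exp.mpr (div_le_div_of_nonneg_right (by linarith) hβ.le)
    have hcard : (#(univ \ A) : ℝ) = n - #A := by
      rw [card_univ_sdiff, Fintype.card_fin, Nat.cast_sub (by simpa using card_le_univ A)]
    have key := abs_div_sum_sub_indicator_le hwA hw hwε hAne (exp_pos _).le i
    rwa [hcard] at key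
end

section
/- Let x ∈ ℝⁿ, β > 0, M = max_j x_j, A = {j : x_j = M} with A ≠ [n], and γ = min_{j ∉ A}(M − x_j). Then for each i ∉ A, 0 ≤ softmax_β(x)_i ≤ exp(−γ/β)/|A|. -/
/-!
Every maximiser contributes `exp (M / β)` to the partition function, so it is at least
`|A| exp (M / β)`, while off the argmax the numerator is at most `exp ((M - γ) / β)`.
-/

open Real Finset

namespace Softmax

variable {ι : Type*} [Fintype ι]

noncomputable def softmax (β : ℝ) (x : ι → ℝ) (i : ι) : ℝ :=
  exp (x i / β) / ∑ j, exp (x j / β)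

theorem softmax_nonneg (β : ℝ) (x : ι → ℝ) (i : ι) : 0 ≤ softmax β x i :=
  div_nonneg (exp_pos _).le (sum_nonneg fun _ _ => (exp_pos _).le)

theorem card_mul_exp_le_sum_exp {s : Finset ι} {x : ι → ℝ} {m : ℝ} (hs : ∀ j ∈ s, x j = m)
    (β : ℝ) : (#s : ℝ) * exp (m / β) ≤ ∑ j, exp (x j / β) :=
  calc (#s : ℝ) * exp (m / β) = ∑ j ∈ s, exp (x j / β) := by
        rw [sum_congr rfl fun j hj => by rw [hs j hj], sum_const, nsmul_eq_mul]
    _ ≤ ∑ j, exp (x j / β) :=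
        sum_le_sum_of_subset_of_nonneg (subset_univ s) fun j _ _ => (exp_pos _).le

theorem softmax_le_exp_sub_div_card {s : Finset ι} (hs : s.Nonempty) {x : ι → ℝ} {m : ℝ}
    (hxs : ∀ j ∈ s, x j = m) (β : ℝ) (i : ι) :
    softmax β x i ≤ exp ((x i - m) / β) / #s := by
  have hcard : (0 : ℝ) < #s := by exact_mod_cast hs.card_pos
  have hpartition : 0 < (#s : ℝ) * exp (m / β) := by positivity
  calc softmax β x i ≤ exp (x i / β) / (#s * exp (m / β)) :=
        div_le_div_of_nonneg_left (exp_pos _).le hpartition (card_mul_exp_le_sum_exp hxs β)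
    _ = exp ((x i - m) / β) / #s := by
        rw [sub_div, exp_sub]
        field_simp

end Softmax

open Softmax in
theorem softmax_off_argmax_bound_general (n : ℕ) [NeZero n] (x : Fin n → ℝ) (β : ℝ) (hβ : 0 < β)
    (A : Finset (Fin n))
    (hA : A = Finset.univ.filter
      (fun j => x j = Finset.univ.sup' Finset.univ_nonempty x))
    (hcompl : (Finset.univ \ A).Nonempty)
    (γ : ℝ)
    (hγ : γ = (Finset.univ \ A).inf' hcompl
      (fun j => Finset.univ.sup' Finset.univ_nonempty x - x j)) :
    ∀ i : Fin n, i ∉ A →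
      0 ≤ Real.exp (x i / β) / (∑ j, Real.exp (x j / β)) ∧
      Real.exp (x i / β) / (∑ j, Real.exp (x j / β))
        ≤ Real.exp (-γ / β) / (A.card : ℝ) := by
  intro i hi
  set M := univ.sup' univ_nonempty x
  have hxA : ∀ j ∈ A, x j = M := fun j hj => by simpa [hA] using hj
  have hA_nonempty : A.Nonempty := by
    obtain ⟨k, -, hk⟩ := exists_mem_eq_sup' univ_nonempty x
    exact ⟨k, by simp [hA, M, hk]⟩
  have hγi : γ ≤ M - x i := hγ ▸ inf'_le _ (by simp [hi])
  refine ⟨softmax_nonneg β x i, (softmax_le_exp_sub_div_card hA_nonempty hxA β i).trans ?_⟩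
  gcongr
  linarith

/-- If `A = {j : x_j = M}` is a proper subset of `[n]` and `γ = min_{j∉A}(M − x_j)`,
then for each `i ∉ A`, `0 ≤ softmax_β(x)_i ≤ exp(−γ/β)/|A|`. -/
theorem softmax_off_argmax_bound (n : ℕ) [NeZero n] (x : Fin n → ℝ) (β : ℝ) (hβ : 0 < β)
    (A : Finset (Fin n))
    (hA : A = Finset.univ.filter
      (fun j => x j = Finset.univ.sup' Finset.univ_nonempty x))
    (hAne : A ≠ Finset.univ)
    (hcompl : (Finset.univ \ A).Nonempty)
    (γ : ℝ)
    (hγ : γ = (Finset.univ \ A).inf' hcompl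
      (fun j => Finset.univ.sup' Finset.univ_nonempty x - x j)) :
    ∀ i : Fin n, i ∉ A →
      0 ≤ Real.exp (x i / β) / (∑ j, Real.exp (x j / β)) ∧
      Real.exp (x i / β) / (∑ j, Real.exp (x j / β))
        ≤ Real.exp (-γ / β) / (A.card : ℝ) :=
  softmax_off_argmax_bound_general n x β hβ A hA hcompl γ hγ
end

section
/- Let x ∈ ℝⁿ, β > 0, M = max_j x_j, A = {j : x_j = M}. Then for each i ∈ A, softmax_β(x)_i = 1/(|A| + ∑_{j ∉ A} exp(−(M − x_j)/β)), and consequently 1/|A| − softmax_β(x)_i ≤ ((n − |A|)/|A|²)·exp(−γ/β) where γ = min_{j∉A}(M − x_j) (with γ = +∞, i.e. the bound 0, when A = [n]). -/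
open Real Finset

/-! Factoring `exp (M / β)` out of the partition function leaves `|A|` from the maximisers
and one term `exp (-(M - x_j) / β) ≤ exp (-γ / β)` from every other index, which gives the
formula. The bound then follows from `1/a - 1/(a + S) = S / (a (a + S)) ≤ S / a²`. -/

lemma sum_exp_div_eq_exp_mul_card_add {ι : Type*} [Fintype ι] [DecidableEq ι]
    (x : ι → ℝ) (M β : ℝ) :
    ∑ j, exp (x j / β) = exp (M / β) *
      ((#(univ.filter fun j => x j = M) : ℝ) +
        ∑ j ∈ univ \ univ.filter fun j => x j = M, exp (-(M - x j) / β)) := by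
  have hshift : ∀ j, exp (x j / β) = exp (M / β) * exp (-(M - x j) / β) := fun j => by
    rw [← exp_add]
    ring_nf
  rw [← sum_filter_add_sum_filter_not univ (fun j => x j = M), filter_not,
    sum_congr rfl fun j hj => by rw [(mem_filter.mp hj).2], sum_const, nsmul_eq_mul,
    mul_add, mul_sum, mul_comm]
  exact congrArg _ (sum_congr rfl fun j _ => hshift j)

lemma sum_exp_neg_div_le_card_mul_exp_inf' {ι : Type*} (s : Finset ι) (hs : s.Nonempty)
    (f : ι → ℝ) {β : ℝ} (hβ : 0 ≤ β) :
    ∑ j ∈ s, exp (-f j / β) ≤ #s * exp (-s.inf' hs f / β) := by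
  rw [← nsmul_eq_mul, ← sum_const]
  refine sum_le_sum fun j hj => exp_le_exp.mpr ?_
  exact div_le_div_of_nonneg_right (neg_le_neg (inf'_le f hj)) hβ

lemma one_div_sub_one_div_add_le {a S : ℝ} (ha : 0 < a) (hS : 0 ≤ S) :
    1 / a - 1 / (a + S) ≤ S / a ^ 2 := by
  rw [div_sub_div _ _ ha.ne' (by positivity), sq]
  calc (1 * (a + S) - a * 1) / (a * (a + S)) = S / (a * (a + S)) := by ring_nf
    _ ≤ S / (a * a) := by gcongr; linarith

/-- For `i` in the argmax set `A` of `x`,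
`softmax_β(x)_i = 1/(|A| + ∑_{j∉A} exp(−(M − x_j)/β))`, and consequently
`1/|A| − softmax_β(x)_i ≤ ((n−|A|)/|A|²)·exp(−γ/β)` where `γ = min_{j∉A}(M − x_j)`
(the bound being `0` when `A = [n]`, corresponding to `γ = +∞`). -/
theorem softmax_on_argmax_formula_and_bound
    (n : ℕ) [NeZero n] (x : Fin n → ℝ) (β : ℝ) (hβ : 0 < β) :
    ∀ i : Fin n,
      letI M : ℝ := Finset.univ.sup' Finset.univ_nonempty x
      letI A : Finset (Fin n) := Finset.univ.filter (fun j => x j = M)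
      i ∈ A →
      Real.exp (x i / β) / (∑ j, Real.exp (x j / β))
        = 1 / ((A.card : ℝ) + ∑ j ∈ Finset.univ \ A, Real.exp (-(M - x j) / β)) ∧
      1 / (A.card : ℝ) - Real.exp (x i / β) / (∑ j, Real.exp (x j / β))
        ≤ if hA : A = Finset.univ then 0
          else
            ((n : ℝ) - A.card) / (A.card : ℝ) ^ 2 *
              Real.exp
                (-(Finset.univ \ A).inf'
                    (Finset.sdiff_nonempty.mpr fun hsub =>
                      hA (Finset.univ_subset_iff.mp hsub))
                    (fun j => M - x j) / β) := by
  intro i hiA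
  set M := univ.sup' univ_nonempty x
  set A := univ.filter fun j => x j = M
  set S := ∑ j ∈ univ \ A, exp (-(M - x j) / β)
  have hxi : x i = M := (mem_filter.mp hiA).2
  have hA_pos : (0 : ℝ) < #A := by exact_mod_cast card_pos.mpr ⟨i, hiA⟩
  have hformula : exp (x i / β) / ∑ j, exp (x j / β) = 1 / (#A + S) := by
    rw [sum_exp_div_eq_exp_mul_card_add x M β, hxi, ← div_div, div_self (exp_pos _).ne']
  refine ⟨hformula, ?_⟩
  rw [hformula]
  split_ifs with hAu
  · have hS : S = 0 := by simp [S, show A = univ from hAu]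
    rw [hS, add_zero, sub_self]
  · have hcompl : ((n : ℝ) - #A) = #(univ \ A) := by
      rw [← compl_eq_univ_sdiff, card_compl, Fintype.card_fin,
        Nat.cast_sub (by simpa using card_le_univ A)]
    calc 1 / (#A : ℝ) - 1 / (#A + S) ≤ S / (#A : ℝ) ^ 2 :=
          one_div_sub_one_div_add_le hA_pos (sum_nonneg fun j _ => (exp_pos _).le)
      _ ≤ _ := by
        rw [hcompl, div_mul_eq_mul_div]
        gcongr
        exact sum_exp_neg_div_le_card_mul_exp_inf' _ _ (fun j => M - x j) hβ.le
end

section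
/- The function softmax_β : ℝ^K → ℝ^K, z ↦ (exp(z_k/β)/∑_j exp(z_j/β))_k, is (1/β)-Lipschitz from (ℝ^K, ‖·‖_∞) to (ℝ^K, ‖·‖_1), i.e., ‖softmax_β(z) − softmax_β(z')‖₁ ≤ (1/β)‖z − z'‖_∞ for all z, z' ∈ ℝ^K. -/
/-!
Move from `y` to `x` along the segment `y + t • u`, `u = x - y`. The derivative of the `k`-th
softmax coordinate is `q k * (u k - ∑ j, q j * u j)` with `q` the current softmax vector, so the
`ℓ¹` norm of the velocity is the mean absolute deviation of `u` under the probability vector `q`.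
By Cauchy–Schwarz it is at most the standard deviation of `u`, which is at most `‖u‖_∞`; the mean
value inequality then bounds the `ℓ¹` distance of the endpoints.
-/

open Real Finset

variable {ι : Type*} [Fintype ι]

lemma sum_mul_abs_sub_sum_mul_le {p u : ι → ℝ} {c : ℝ} (hp : ∀ k, 0 ≤ p k) (hp1 : ∑ k, p k = 1)
    (hu : ∀ k, |u k| ≤ c) : ∑ k, p k * |u k - ∑ j, p j * u j| ≤ c := by
  set m := ∑ j, p j * u j
  have hc : 0 ≤ c := calc
    0 ≤ ∑ k, p k * |u k| := sum_nonneg fun k _ => mul_nonneg (hp k) (abs_nonneg _)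
    _ ≤ ∑ k, p k * c := by gcongr with k; exacts [hp k, hu k]
    _ = c := by rw [← sum_mul, hp1, one_mul]
  have cauchy_schwarz : (∑ k, p k * |u k - m|) ^ 2 ≤ ∑ k, p k * (u k - m) ^ 2 := by
    simpa [hp1] using sum_sq_le_sum_mul_sum_of_sq_le_mul univ (fun k _ => hp k)
      (fun k _ => mul_nonneg (hp k) (sq_nonneg (u k - m)))
      (fun k _ => by rw [mul_pow, sq_abs, sq, mul_assoc])
  have variance : ∑ k, p k * (u k - m) ^ 2 = ∑ k, p k * u k ^ 2 - m ^ 2 := by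
    have expand : ∀ k, p k * (u k - m) ^ 2 = p k * u k ^ 2 - 2 * m * (p k * u k) + m ^ 2 * p k :=
      fun k => by ring
    simp only [expand, sum_add_distrib, sum_sub_distrib, ← mul_sum, hp1]
    ring
  have second_moment : ∑ k, p k * u k ^ 2 ≤ c ^ 2 := calc
    ∑ k, p k * u k ^ 2 ≤ ∑ k, p k * c ^ 2 :=
      sum_le_sum fun k _ =>
        mul_le_mul_of_nonneg_left (sq_le_sq.mpr ((hu k).trans (le_abs_self c))) (hp k)
    _ = c ^ 2 := by rw [← sum_mul, hp1, one_mul]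
  exact le_of_sq_le_sq (by nlinarith [sq_nonneg m]) hc

lemma sum_abs_sub_le_of_hasDerivAt {f f' : ℝ → ι → ℝ} {C : ℝ}
    (hf : ∀ t k, HasDerivAt (f · k) (f' t k) t) (bound : ∀ t, ∑ k, |f' t k| ≤ C) :
    ∑ k, |f 1 k - f 0 k| ≤ C := by
  -- Pairing with the signs of the increments reduces this to the scalar mean value inequality.
  set s : ι → ℝ := fun k => SignType.sign (f 1 k - f 0 k)
  have abs_s_le : ∀ k, |s k| ≤ 1 := fun k => by
    rcases lt_trichotomy (f 1 k - f 0 k) 0 with h | h | h <;> simp [s, h]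
  have mvt := norm_image_sub_le_of_norm_deriv_le_segment_01' (f := fun t => ∑ k, s k * f t k)
    (fun t _ => (HasDerivAt.fun_sum fun k _ => (hf t k).const_mul (s k)).hasDerivWithinAt)
    (fun t _ => (abs_sum_le_sum_abs _ _).trans <| (sum_le_sum fun k _ => ?_).trans (bound t))
  · calc ∑ k, |f 1 k - f 0 k| = ∑ k, s k * f 1 k - ∑ k, s k * f 0 k := by
          simp only [← sum_sub_distrib, ← mul_sub, s, sign_mul_self]
      _ ≤ C := (le_abs_self _).trans mvt
  · rw [abs_mul]
    exact mul_le_of_le_one_left (abs_nonneg _) (abs_s_le k)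

noncomputable def softmax (x : ι → ℝ) (k : ι) : ℝ := exp (x k) / ∑ j, exp (x j)

lemma sum_exp_pos [Nonempty ι] (x : ι → ℝ) : 0 < ∑ j, exp (x j) :=
  sum_pos (fun _ _ => exp_pos _) univ_nonempty

lemma softmax_nonneg (x : ι → ℝ) (k : ι) : 0 ≤ softmax x k :=
  div_nonneg (exp_pos _).le (sum_nonneg fun _ _ => (exp_pos _).le)

lemma sum_softmax [Nonempty ι] (x : ι → ℝ) : ∑ k, softmax x k = 1 := by
  simp_rw [softmax, ← sum_div, div_self (sum_exp_pos x).ne']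

lemma hasDerivAt_softmax_add_smul [Nonempty ι] (x u : ι → ℝ) (k : ι) (t : ℝ) :
    HasDerivAt (fun t => softmax (x + t • u) k)
      (softmax (x + t • u) k * (u k - ∑ j, softmax (x + t • u) j * u j)) t := by
  have hexp : ∀ j, HasDerivAt (fun t => exp ((x + t • u) j)) (exp ((x + t • u) j) * u j) t :=
    fun j => by simpa using ((hasDerivAt_mul_const (u j)).const_add (x j)).exp
  refine ((hexp k).div (HasDerivAt.fun_sum fun j _ => hexp j) (sum_exp_pos _).ne').congr_deriv ?_
  simp only [softmax, div_mul_eq_mul_div, ← sum_div]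
  field_simp

lemma sum_abs_softmax_sub_softmax_le [Nonempty ι] {x y : ι → ℝ} {c : ℝ}
    (hc : ∀ k, |x k - y k| ≤ c) : ∑ k, |softmax x k - softmax y k| ≤ c := by
  have := sum_abs_sub_le_of_hasDerivAt (C := c) (f := fun t => softmax (y + t • (x - y)))
    (fun t k => hasDerivAt_softmax_add_smul y (x - y) k t) fun t => ?_
  · simpa using this
  simp only [abs_mul, abs_of_nonneg (softmax_nonneg _ _)]
  exact sum_mul_abs_sub_sum_mul_le (softmax_nonneg _) (sum_softmax _) hc

/-- `softmax_β` is `(1/β)`-Lipschitz from `(ℝ^K, ‖·‖_∞)` to `(ℝ^K, ‖·‖₁)`: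
`‖softmax_β(z) − softmax_β(z')‖₁ ≤ (1/β)‖z − z'‖_∞`. -/
theorem softmax_lipschitz_inf_to_one (K : ℕ) [NeZero K] (β : ℝ) (hβ : 0 < β) :
    ∀ z z' : Fin K → ℝ,
      ∑ k, |Real.exp (z k / β) / (∑ j, Real.exp (z j / β)) -
            Real.exp (z' k / β) / (∑ j, Real.exp (z' j / β))|
        ≤ (1 / β) * Finset.univ.sup' Finset.univ_nonempty (fun k => |z k - z' k|) := by
  intro z z'
  refine sum_abs_softmax_sub_softmax_le (x := (z · / β)) (y := (z' · / β)) fun k => ?_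
  rw [← sub_div, abs_div, abs_of_pos hβ, one_div_mul_eq_div]
  gcongr
  exact le_sup' (fun k => |z k - z' k|) (mem_univ k)
end
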